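/- Let (X,T) be a simple, properly ordered Bratteli-Vershik system. If some telescoping of (X,T) is weakly well timed, then (X,T) is weakly well timed. -/

import Mathlib

set_option autoImplicit false

/-- An ordered Bratteli diagram: finite nonempty vertex sets `V n`, a single root
vertex at level `0`, finite edge sets `E n` (edges from level `n` to level `n+1`,
multiple edges allowed), every vertex has an outgoing edge, every non-root vertex
an incoming edge, and the edges into each vertex carry a linear order, encoded by
the relation `elt` which relates only edges with the same target. -/
structure BDiagram where
  V : ℕ → Type
  E : ℕ → Type
  fintV : ∀ n, Fintype (V n)
  fintE : ∀ n, Fintype (E n)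
  nonV : ∀ n, Nonempty (V n)
  rootSubsingleton : Subsingleton (V 0)
  src : ∀ {n}, E n → V n
  tgt : ∀ {n}, E n → V (n + 1)
  hasOut : ∀ (n : ℕ) (v : V n), ∃ e : E n, src e = v
  hasIn : ∀ (n : ℕ) (v : V (n + 1)), ∃ e : E n, tgt e = v
  elt : ∀ {n}, E n → E n → Prop
  elt_tgt : ∀ (n : ℕ) (e f : E n), elt e f → tgt e = tgt f
  elt_irrefl : ∀ (n : ℕ) (e : E n), ¬ elt e e
  elt_trans : ∀ (n : ℕ) (e f g : E n), elt e f → elt f g → elt e g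
  elt_total : ∀ (n : ℕ) (e f : E n), tgt e = tgt f → e ≠ f → elt e f ∨ elt f e

namespace BDiagram

variable (B : BDiagram)

def castV {m n : ℕ} (h : m = n) (v : B.V m) : B.V n := h ▸ v

/-- An edge is minimal if no edge (into the same target) is below it. -/
def IsMinEdge {n : ℕ} (e : B.E n) : Prop := ∀ e' : B.E n, ¬ B.elt e' e

/-- An edge is maximal if no edge (into the same target) is above it. -/
def IsMaxEdge {n : ℕ} (e : B.E n) : Prop := ∀ e' : B.E n, ¬ B.elt e e'

/-- The space of infinite paths from the root. -/
def PathSpace : Type := { x : ∀ n, B.E n // ∀ n, B.tgt (x n) = B.src (x (n + 1)) }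

def IsMinPath (x : B.PathSpace) : Prop := ∀ n, B.IsMinEdge (x.1 n)

def IsMaxPath (x : B.PathSpace) : Prop := ∀ n, B.IsMaxEdge (x.1 n)

/-- Properly ordered: unique minimal and unique maximal path. -/
def ProperlyOrdered : Prop :=
  (∃! x : B.PathSpace, B.IsMinPath x) ∧ (∃! x : B.PathSpace, B.IsMaxPath x)

/-- The partial order on cofinal paths: `x < y` iff they eventually agree and at the
last disagreement the edge of `x` is below the edge of `y`. -/
def pathLT (x y : B.PathSpace) : Prop :=
  ∃ N : ℕ, B.elt (x.1 N) (y.1 N) ∧ ∀ n : ℕ, N < n → x.1 n = y.1 n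

/-- `T` is the Vershik map: each non-maximal path goes to its successor, and each
maximal path goes to a minimal path. -/
def IsVershik (T : B.PathSpace ≃ B.PathSpace) : Prop :=
  (∀ x : B.PathSpace, ¬ B.IsMaxPath x →
    B.pathLT x (T x) ∧ ∀ z : B.PathSpace, B.pathLT x z → ¬ B.pathLT z (T x)) ∧
  (∀ x : B.PathSpace, B.IsMaxPath x → B.IsMinPath (T x))

/-- `f` is a chain of consecutive edges on levels `[a, b)`. -/
def SegOn (f : ∀ i, B.E i) (a b : ℕ) : Prop :=
  ∀ i : ℕ, a ≤ i → i + 1 < b → B.tgt (f i) = B.src (f (i + 1))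

/-- Simplicity: some telescoping has complete connections between adjacent levels. -/
def Simple : Prop :=
  ∃ ns : ℕ → ℕ, StrictMono ns ∧ ns 0 = 0 ∧
    ∀ (l c : ℕ), ns (l + 1) = c + 1 →
      ∀ (v : B.V (ns l)) (w : B.V (c + 1)),
        ∃ f : ∀ i, B.E i, B.SegOn f (ns l) (c + 1) ∧ B.src (f (ns l)) = v ∧ B.tgt (f c) = w

/-- The natural (Cantor) topology on the path space, induced from the product of
the discrete topologies on the edge sets. -/
def pathTop : TopologicalSpace B.PathSpace :=
  TopologicalSpace.induced Subtype.val (@Pi.topologicalSpace ℕ B.E (fun _ => ⊥))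

/-- Integer iterates of a bijection of the path space. -/
def iterZ (T : B.PathSpace ≃ B.PathSpace) (m : ℤ) : B.PathSpace ≃ B.PathSpace :=
  (T : Equiv.Perm B.PathSpace) ^ m

/-- Two paths have the same `k`-coding: for every time `m` the initial segments of
`T^m x` and `T^m y` from the root to level `k` coincide. -/
def SameCoding (T : B.PathSpace ≃ B.PathSpace) (k : ℕ) (x y : B.PathSpace) : Prop :=
  ∀ (m : ℤ) (i : ℕ), i < k → ((B.iterZ T m) x).1 i = ((B.iterZ T m) y).1 i

/-- A depth `k` pair: distinct paths with the same `k`-coding but not the same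
`(k+1)`-coding. -/
def DepthPair (T : B.PathSpace ≃ B.PathSpace) (k : ℕ) (x y : B.PathSpace) : Prop :=
  x ≠ y ∧ B.SameCoding T k x y ∧ ¬ B.SameCoding T (k + 1) x y

/-- The pair `x, y` has a `j` cut: for some time `m`, both `T^m x` and `T^m y` are
minimal from the root into level `j`. -/
def HasCut (T : B.PathSpace ≃ B.PathSpace) (j : ℕ) (x y : B.PathSpace) : Prop :=
  ∃ m : ℤ, (∀ i : ℕ, i < j → B.IsMinEdge (((B.iterZ T m) x).1 i)) ∧
    (∀ i : ℕ, i < j → B.IsMinEdge (((B.iterZ T m) y).1 i))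

/-- Nonexpansive: for every `k ≥ 1` there are two distinct paths with the same
`k`-coding. -/
def Nonexpansive (T : B.PathSpace ≃ B.PathSpace) : Prop :=
  ∀ k : ℕ, 1 ≤ k → ∃ x y : B.PathSpace, x ≠ y ∧ B.SameCoding T k x y

/-- Well timed: for every `k ≥ 1` and every `j > k` there is a depth `k` pair with
a `j` cut. -/
def WellTimed (T : B.PathSpace ≃ B.PathSpace) : Prop :=
  ∀ k : ℕ, 1 ≤ k → ∀ j : ℕ, k < j →
    ∃ x y : B.PathSpace, B.DepthPair T k x y ∧ B.HasCut T j x y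

/-- Very well timed: for every `k ≥ 1` there is a depth `k` pair having a `j` cut
for every `j > k`. -/
def VeryWellTimed (T : B.PathSpace ≃ B.PathSpace) : Prop :=
  ∀ k : ℕ, 1 ≤ k →
    ∃ x y : B.PathSpace, B.DepthPair T k x y ∧ ∀ j : ℕ, k < j → B.HasCut T j x y

/-- Weakly well timed: for infinitely many `k ≥ 1`, for every `j > k` there is a
depth `k` pair with a `j` cut. -/
def WeaklyWellTimed (T : B.PathSpace ≃ B.PathSpace) : Prop :=
  ∀ K : ℕ, ∃ k : ℕ, K ≤ k ∧ 1 ≤ k ∧ ∀ j : ℕ, k < j →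
    ∃ x y : B.PathSpace, B.DepthPair T k x y ∧ B.HasCut T j x y

/-- Untimed: for every `k ≥ 1` there is a `j > k` such that no depth `k` pair has a
`j` cut. -/
def Untimed (T : B.PathSpace ≃ B.PathSpace) : Prop :=
  ∀ k : ℕ, 1 ≤ k → ∃ j : ℕ, k < j ∧
    ∀ x y : B.PathSpace, B.DepthPair T k x y → ¬ B.HasCut T j x y

/-- Very untimed: for every `k ≥ 1`, no depth `k` pair has a `(k+1)` cut. -/
def VeryUntimed (T : B.PathSpace ≃ B.PathSpace) : Prop :=
  ∀ k : ℕ, 1 ≤ k →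
    ∀ x y : B.PathSpace, B.DepthPair T k x y → ¬ B.HasCut T (k + 1) x y

/-- Finite paths from the root to level `n`. -/
def FinPath (n : ℕ) : Type :=
  { f : (i : Fin n) → B.E i.val //
    ∀ (i : ℕ) (h : i + 1 < n), B.tgt (f ⟨i, by omega⟩) = B.src (f ⟨i + 1, h⟩) }

/-- The lexicographic (from the end) order on finite paths to level `n` induced by
the orders on the edges. -/
def finLT {n : ℕ} (p q : B.FinPath n) : Prop :=
  ∃ (N : ℕ) (h : N < n), B.elt (p.1 ⟨N, h⟩) (q.1 ⟨N, h⟩) ∧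
    ∀ (i : ℕ) (hi : i < n), N < i → p.1 ⟨i, hi⟩ = q.1 ⟨i, hi⟩

/-- The finite path `p` to level `n` ends at the vertex `v`. -/
def EndsAt {n : ℕ} (p : B.FinPath n) (v : B.V n) : Prop :=
  ∀ (m : ℕ) (h : n = m + 1), B.tgt (p.1 ⟨m, by omega⟩) = B.castV h v

/-- The initial segment of an infinite path, from the root to level `n`. -/
def pathInit (x : B.PathSpace) (n : ℕ) : B.FinPath n :=
  ⟨fun i => x.1 i.val, fun i _ => x.2 i⟩

/-- The vertex of an infinite path at level `n`. -/
def pathVert (x : B.PathSpace) (n : ℕ) : B.V n := B.src (x.1 n)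

theorem pathInit_endsAt (x : B.PathSpace) (n : ℕ) :
    B.EndsAt (B.pathInit x n) (B.pathVert x n) := by
  intro m h
  subst h
  exact x.2 m

/-- Truncation of a finite path to a lower level. -/
def truncTo {n : ℕ} (k : ℕ) (hk : k ≤ n) (p : B.FinPath n) : B.FinPath k :=
  ⟨fun i => p.1 ⟨i.val, by omega⟩, fun i h => p.2 i (by omega)⟩

/-- Paths `x, x'` are `k`-equivalent at level `n`: there is an order isomorphism
between the sets of finite paths from the root into their level-`n` vertices which
preserves truncations to level `k` (equality of `k`-basic blocks) and which matches
the initial segment of `x` with the initial segment of `x'` (the "dot" is in the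
same place). -/
def KEquivAt (k n : ℕ) (x x' : B.PathSpace) : Prop :=
  ∃ φ : { p : B.FinPath n // B.EndsAt p (B.pathVert x n) } ≃
      { p : B.FinPath n // B.EndsAt p (B.pathVert x' n) },
    (∀ p q, B.finLT p.1 q.1 ↔ B.finLT (φ p).1 (φ q).1) ∧
    (∀ p (i : ℕ) (hik : i < k) (hin : i < n), ((φ p).1).1 ⟨i, hin⟩ = (p.1).1 ⟨i, hin⟩) ∧
    φ ⟨B.pathInit x n, B.pathInit_endsAt x n⟩ = ⟨B.pathInit x' n, B.pathInit_endsAt x' n⟩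

/-- Paths are `k`-equivalent: they agree from the root to level `k` and are
`k`-equivalent at every level `n > k`. -/
def KEquivPaths (k : ℕ) (x x' : B.PathSpace) : Prop :=
  (∀ i : ℕ, i < k → x.1 i = x'.1 i) ∧ ∀ n : ℕ, k < n → B.KEquivAt k n x x'

/-- Standard nonexpansive: for every `k ≥ 1` there is a pair of distinct
`k`-equivalent paths. -/
def SNE : Prop := ∀ k : ℕ, 1 ≤ k → ∃ x x' : B.PathSpace, x ≠ x' ∧ B.KEquivPaths k x x'

/-!  ### Telescoping  -/

theorem castV_eq_of_heq {m n : ℕ} (h : m = n) {v : B.V m} {w : B.V n} (hw : HEq v w) :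
    B.castV h v = w := by
  subst h
  exact eq_of_heq hw

theorem castV_heq {m n : ℕ} (h : m = n) (v : B.V m) : HEq (B.castV h v) v := by
  subst h
  rfl

theorem castV_inj {m n : ℕ} (h : m = n) {v w : B.V m}
    (hvw : B.castV h v = B.castV h w) : v = w := by
  subst h
  exact hvw

def castE {m n : ℕ} (h : m = n) (e : B.E m) : B.E n := h ▸ e

noncomputable def chainFrom (a : ℕ) (v : B.V a) : (i : ℕ) → B.E (a + i)
  | 0 => (B.hasOut a v).choose
  | i + 1 => (B.hasOut (a + i + 1) (B.tgt (chainFrom a v i))).choose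

theorem chainFrom_src_zero (a : ℕ) (v : B.V a) : B.src (B.chainFrom a v 0) = v :=
  (B.hasOut a v).choose_spec

theorem chainFrom_src_succ (a : ℕ) (v : B.V a) (i : ℕ) :
    B.src (B.chainFrom a v (i + 1)) = B.tgt (B.chainFrom a v i) :=
  (B.hasOut (a + i + 1) (B.tgt (B.chainFrom a v i))).choose_spec

noncomputable def chainTo (a : ℕ) : (j : ℕ) → (w : B.V (a + j + 1)) → (i : ℕ) → i ≤ j → B.E (a + i)
  | 0, w, i, _ => B.castE (by omega : a + 0 = a + i) (B.hasIn a w).choose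
  | j + 1, w, i, _ =>
      if h : i ≤ j then chainTo a j (B.src (B.hasIn (a + j + 1) w).choose) i h
      else B.castE (by omega : a + (j + 1) = a + i) (B.hasIn (a + j + 1) w).choose

theorem chainTo_tgt_last (a : ℕ) : ∀ (j : ℕ) (w : B.V (a + j + 1)),
    B.tgt (B.chainTo a j w j le_rfl) = w := by
  intro j w
  cases j with
  | zero =>
      simp only [chainTo]
      exact (B.hasIn a w).choose_spec
  | succ j =>
      simp only [chainTo]
      rw [dif_neg (by omega : ¬ j + 1 ≤ j)]
      exact (B.hasIn (a + j + 1) w).choose_spec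

theorem chainTo_chain (a : ℕ) : ∀ (j : ℕ) (w : B.V (a + j + 1)) (i : ℕ) (h : i + 1 ≤ j)
    (h' : i ≤ j), B.tgt (B.chainTo a j w i h') = B.src (B.chainTo a j w (i + 1) h) := by
  intro j
  induction j with
  | zero => intro w i h h'; omega
  | succ j ih =>
      intro w i h h'
      by_cases hij : i + 1 ≤ j
      · simp only [chainTo]
        rw [dif_pos (by omega : i ≤ j), dif_pos hij]
        exact ih _ i hij (by omega)
      · have hi : i = j := by omega
        subst hi
        simp only [chainTo]
        rw [dif_pos (le_refl i), dif_neg (by omega : ¬ i + 1 ≤ i)]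
        exact B.chainTo_tgt_last a i _


def TelE (a b : ℕ) : Type :=
  { f : (i : Fin (b - a)) → B.E (a + i.val) //
    ∀ (i : ℕ) (h : i + 1 < b - a), B.tgt (f ⟨i, by omega⟩) = B.src (f ⟨i + 1, h⟩) }

def telSrc {a b : ℕ} (hab : a < b) (f : B.TelE a b) : B.V a :=
  B.src (f.1 ⟨0, by omega⟩)

def telTgt {a b : ℕ} (hab : a < b) (f : B.TelE a b) : B.V b :=
  B.castV (by omega : a + (b - a - 1) + 1 = b) (B.tgt (f.1 ⟨b - a - 1, by omega⟩))

def telLT {a b : ℕ} (f g : B.TelE a b) : Prop :=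
  ∃ (N : ℕ) (h : N < b - a), B.elt (f.1 ⟨N, h⟩) (g.1 ⟨N, h⟩) ∧
    ∀ (i : ℕ) (hi : i < b - a), N < i → f.1 ⟨i, hi⟩ = g.1 ⟨i, hi⟩

noncomputable def Telescope (ns : ℕ → ℕ) (hmono : StrictMono ns) (h0 : ns 0 = 0) : BDiagram where
  V l := B.V (ns l)
  E l := B.TelE (ns l) (ns (l + 1))
  fintV l := B.fintV (ns l)
  fintE l := by
    classical
    letI : ∀ i : Fin (ns (l + 1) - ns l), Fintype (B.E (ns l + i.val)) := fun i => B.fintE _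
    exact Subtype.fintype _
  nonV l := B.nonV (ns l)
  rootSubsingleton := by show Subsingleton (B.V (ns 0)); rw [h0]; exact B.rootSubsingleton
  src {l} f := B.telSrc (hmono (Nat.lt_succ_self l)) f
  tgt {l} f := B.telTgt (hmono (Nat.lt_succ_self l)) f
  hasOut := by
    intro l v
    refine ⟨⟨fun i => B.chainFrom (ns l) v i.val,
      fun i h => (B.chainFrom_src_succ (ns l) v i).symm⟩, ?_⟩
    exact B.chainFrom_src_zero (ns l) v
  hasIn := by
    intro l w
    have hab : ns l < ns (l + 1) := hmono (Nat.lt_succ_self l)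
    have hj : ns l + (ns (l + 1) - ns l - 1) + 1 = ns (l + 1) := by omega
    refine ⟨⟨fun i => B.chainTo (ns l) (ns (l + 1) - ns l - 1) (B.castV hj.symm w) i.val
        (by omega), fun i h => B.chainTo_chain _ _ _ i (by omega) (by omega)⟩, ?_⟩
    show B.castV (by omega) (B.tgt (B.chainTo (ns l) (ns (l + 1) - ns l - 1)
      (B.castV hj.symm w) (ns (l + 1) - ns l - 1) (by omega))) = w
    rw [B.chainTo_tgt_last]
    exact B.castV_eq_of_heq _ (B.castV_heq _ w)
  elt {l} f g := B.telLT f g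
  elt_tgt := by
    rintro l f g ⟨N, hN, hlt, hgt⟩
    show B.telTgt _ f = B.telTgt _ g
    unfold telTgt
    refine congrArg (B.castV _) ?_
    rcases eq_or_lt_of_le (show N ≤ ns (l + 1) - ns l - 1 by omega) with h | h
    · subst h
      exact B.elt_tgt _ _ _ hlt
    · exact congrArg B.tgt (hgt _ (by omega) h)
  elt_irrefl := by
    rintro l f ⟨N, h, hlt, -⟩
    exact B.elt_irrefl _ _ hlt
  elt_trans := by
    rintro l f g h ⟨N₁, hN₁, hlt₁, hgt₁⟩ ⟨N₂, hN₂, hlt₂, hgt₂⟩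
    rcases lt_trichotomy N₁ N₂ with hc | hc | hc
    · exact ⟨N₂, hN₂, by rw [hgt₁ N₂ hN₂ hc]; exact hlt₂,
        fun i hi hN => (hgt₁ i hi (by omega)).trans (hgt₂ i hi hN)⟩
    · subst hc
      exact ⟨N₁, hN₁, B.elt_trans _ _ _ _ hlt₁ hlt₂,
        fun i hi hN => (hgt₁ i hi hN).trans (hgt₂ i hi hN)⟩
    · refine ⟨N₁, hN₁, ?_, fun i hi hN => (hgt₁ i hi hN).trans (hgt₂ i hi (by omega))⟩
      rw [← hgt₂ N₁ hN₁ hc]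
      exact hlt₁
  elt_total := by
    intro l f g htgt hne
    classical
    have hab : ns l < ns (l + 1) := hmono (Nat.lt_succ_self l)
    set b := ns (l + 1) - ns l with hb
    have hex : ∃ N, ∃ h : N < b, f.1 ⟨N, h⟩ ≠ g.1 ⟨N, h⟩ := by
      by_contra hco
      push_neg at hco
      exact hne (Subtype.ext (funext fun i => hco i.val i.isLt))
    set P : ℕ → Prop := fun N => ∃ h : N < b, f.1 ⟨N, h⟩ ≠ g.1 ⟨N, h⟩ with hP
    obtain ⟨N₀, hN₀⟩ := hex
    set N := Nat.findGreatest P b with hNdef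
    have hPN : P N := Nat.findGreatest_spec (le_of_lt hN₀.choose) hN₀
    have hafter : ∀ i (hi : i < b), N < i → f.1 ⟨i, hi⟩ = g.1 ⟨i, hi⟩ := by
      intro i hi hNi
      by_contra hcon
      exact Nat.findGreatest_is_greatest hNi (le_of_lt hi) ⟨hi, hcon⟩
    clear_value N
    obtain ⟨hNb, hNne⟩ := hPN
    have htgtN : B.tgt (f.1 ⟨N, hNb⟩) = B.tgt (g.1 ⟨N, hNb⟩) := by
      rcases eq_or_lt_of_le (show N ≤ b - 1 by omega) with h | h
      · -- N is the last index; use equality of targets of the composite edges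
        subst h
        exact B.castV_inj _ htgt
      · have h2 : f.1 ⟨N + 1, by omega⟩ = g.1 ⟨N + 1, by omega⟩ :=
          hafter (N + 1) (by omega) (by omega)
        rw [f.2 N (by omega), g.2 N (by omega), h2]
    rcases B.elt_total _ _ _ htgtN hNne with h | h
    · exact Or.inl ⟨N, hNb, h, hafter⟩
    · exact Or.inr ⟨N, hNb, h, fun i hi hN => (hafter i hi hN).symm⟩

def teleMap (ns : ℕ → ℕ) (hmono : StrictMono ns) (h0 : ns 0 = 0) (x : B.PathSpace) :
    (B.Telescope ns hmono h0).PathSpace :=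
  ⟨fun l => ⟨fun i => x.1 (ns l + i.val), fun i _ => x.2 (ns l + i)⟩, fun l => by
    have hab : ns l < ns (l + 1) := hmono (Nat.lt_succ_self l)
    have hm : ns l + (ns (l + 1) - ns l - 1) + 1 = ns (l + 1) := by omega
    show B.castV _ (B.tgt (x.1 (ns l + (ns (l + 1) - ns l - 1)))) = B.src (x.1 (ns (l + 1) + 0))
    rw [x.2 (ns l + (ns (l + 1) - ns l - 1))]
    exact B.castV_eq_of_heq _ (by rw [hm]; exact HEq.rfl)⟩


/-- Level `n+1` is uniformly ordered: there is a single nonempty block `P` of paths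
from the root to level `n` such that the `n`-basic block at every vertex at level
`n+1` is a positive power of `P`. -/
def UniformlyOrderedLevel (n : ℕ) : Prop :=
  ∃ (p : ℕ) (hp : 0 < p) (P : Fin p → B.FinPath n),
    ∀ v : B.V (n + 1), ∃ (m : ℕ), 0 < m ∧
      ∃ enum : Fin (m * p) ≃ { q : B.FinPath (n + 1) // B.EndsAt q v },
        (∀ i j : Fin (m * p), i < j ↔ B.finLT (enum i).1 (enum j).1) ∧
        (∀ i : Fin (m * p),
          B.truncTo n (Nat.le_succ n) (enum i).1 = P ⟨i.val % p, Nat.mod_lt _ hp⟩)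

/-- The ordinal label of an edge: its position in the linear order on the edges
into its target. -/
noncomputable def edgeLabel {n : ℕ} (e : B.E n) : ℕ := Nat.card { e' : B.E n // B.elt e' e }

/-- Deterministic: for every `n ≥ 1`, distinct edges with the same source at level
`n` have different ordinal labels. -/
def Deterministic : Prop :=
  ∀ n : ℕ, 1 ≤ n → ∀ e f : B.E n, B.src e = B.src f → e ≠ f →
    B.edgeLabel e ≠ B.edgeLabel f

end BDiagram

/-- A Bratteli–Vershik system: a simple, properly ordered ordered Bratteli diagram
together with its Vershik map. -/
structure BVSystem where
  B : BDiagram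
  T : B.PathSpace ≃ B.PathSpace
  proper : B.ProperlyOrdered
  simple : B.Simple
  vershik : B.IsVershik T

/-- Conjugacy of systems: an equivariant homeomorphism of the path spaces taking
minimal paths to minimal paths. -/
def Conjugate (S S' : BVSystem) : Prop :=
  ∃ φ : S.B.PathSpace ≃ S'.B.PathSpace,
    (@Continuous _ _ S.B.pathTop S'.B.pathTop φ) ∧
    (@Continuous _ _ S'.B.pathTop S.B.pathTop φ.symm) ∧
    (∀ x, φ (S.T x) = S'.T (φ x)) ∧
    (∀ x, S.B.IsMinPath x → S'.B.IsMinPath (φ x))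

/-- An odometer: a system whose diagram has exactly one vertex at every level. -/
def IsOdometer (S : BVSystem) : Prop := ∀ n, Subsingleton (S.B.V n)

/-! Telescoping identifies the two path spaces by cutting a path into its blocks of edges between
the levels `ns l` and `ns (l + 1)`. This bijection intertwines the Vershik maps: it preserves the
order of cofinal paths, and, the diagram being properly ordered, both maps send the maximal path
to the unique minimal path. As level `l` of the telescope is the block `[ns l, ns (l + 1))` of
levels, equal telescoped `k`-codings are equal `ns k`-codings and telescoped `j` cuts are `ns j`
cuts. So a depth `k` pair of the telescope is a depth `n` pair of the system for some
`n ∈ [ns k, ns (k + 1))`. Among these finitely many `n`, one carries pairs with a `j` cut for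
arbitrarily large `j`, hence, cuts being monotone in `j`, for all `j`.
-/

theorem Nat.exists_mem_Ico_and_not_succ {P : ℕ → Prop} {a b : ℕ} (hab : a ≤ b) (ha : P a)
    (hb : ¬ P b) : ∃ k ∈ Finset.Ico a b, P k ∧ ¬ P (k + 1) := by
  by_contra! h
  have : ∀ n, a ≤ n → n ≤ b → P n := fun n han => by
    induction n, han using Nat.le_induction with
    | base => exact fun _ => ha
    | succ n han ih => exact fun hnb => h n (Finset.mem_Ico.2 ⟨han, by omega⟩) (ih (by omega))
  exact hb (this b hab le_rfl)

theorem Finset.exists_mem_forall_of_antitone {ι : Type*} (s : Finset ι) {P : ι → ℕ → Prop}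
    (hP : ∀ i, Antitone (P i)) (h : ∀ t, ∃ i ∈ s, P i t) : ∃ i ∈ s, ∀ t, P i t := by
  classical
  by_contra! hne
  choose! t ht using hne
  obtain ⟨i, hi, hPi⟩ := h (s.sup t)
  exact ht i hi (hP i (Finset.le_sup hi) hPi)

section Blocks

variable {ns : ℕ → ℕ}

theorem StrictMono.exists_lt_apply_succ (hmono : StrictMono ns) (n : ℕ) : ∃ l, n < ns (l + 1) :=
  ⟨n, (hmono.le_apply (x := n)).trans_lt (hmono n.lt_succ_self)⟩

noncomputable def blockIndex (hmono : StrictMono ns) (n : ℕ) : ℕ :=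
  Nat.find (hmono.exists_lt_apply_succ n)

theorem apply_blockIndex_le (hmono : StrictMono ns) (h0 : ns 0 = 0) (n : ℕ) :
    ns (blockIndex hmono n) ≤ n := by
  cases h : blockIndex hmono n with
  | zero => rw [h0]; exact n.zero_le
  | succ l =>
    exact not_lt.1 (Nat.find_min (hmono.exists_lt_apply_succ n) (h ▸ l.lt_succ_self :
      l < blockIndex hmono n))

theorem lt_apply_blockIndex_succ (hmono : StrictMono ns) (n : ℕ) :
    n < ns (blockIndex hmono n + 1) :=
  Nat.find_spec (hmono.exists_lt_apply_succ n)

theorem blockIndex_eq (hmono : StrictMono ns) (h0 : ns 0 = 0) {l n : ℕ} (h1 : ns l ≤ n)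
    (h2 : n < ns (l + 1)) : blockIndex hmono n = l := by
  have := apply_blockIndex_le hmono h0 n
  have := lt_apply_blockIndex_succ hmono n
  rcases lt_trichotomy (blockIndex hmono n) l with h | h | h
  · have := hmono.monotone (by omega : blockIndex hmono n + 1 ≤ l); omega
  · exact h
  · have := hmono.monotone (by omega : l + 1 ≤ blockIndex hmono n); omega

theorem exists_block_add (hmono : StrictMono ns) (h0 : ns 0 = 0) (n : ℕ) :
    ∃ l, ∃ j < ns (l + 1) - ns l, n = ns l + j := by
  have := apply_blockIndex_le hmono h0 n
  have := lt_apply_blockIndex_succ hmono n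
  exact ⟨blockIndex hmono n, n - ns (blockIndex hmono n), by omega, by omega⟩

theorem forall_block_iff (hmono : StrictMono ns) (h0 : ns 0 = 0) {Q : ℕ → Prop} (k : ℕ) :
    (∀ l < k, ∀ j < ns (l + 1) - ns l, Q (ns l + j)) ↔ ∀ n < ns k, Q n := by
  refine ⟨fun h n hn => ?_, fun h l hl j hj => h _ ?_⟩
  · obtain ⟨l, j, hj, rfl⟩ := exists_block_add hmono h0 n
    refine h l ?_ j hj
    by_contra! hkl
    have := hmono.monotone hkl
    omega
  · have := hmono.monotone (by omega : l + 1 ≤ k)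
    omega

end Blocks

namespace BDiagram

variable (B : BDiagram)

theorem exists_chain_to_edge {i : ℕ} (e : B.E i) :
    ∃ f : ∀ n, B.E n, f i = e ∧ ∀ n < i, B.tgt (f n) = B.src (f (n + 1)) := by
  classical
  induction i with
  | zero =>
    let f₀ : ∀ n, B.E n := fun n => (B.hasOut n (Classical.choice (B.nonV n))).choose
    exact ⟨Function.update f₀ 0 e, Function.update_self _ _ _,
      fun _ hn => (Nat.not_lt_zero _ hn).elim⟩
  | succ i ih =>
    obtain ⟨e₀, he₀⟩ := B.hasIn i (B.src e)
    obtain ⟨f, hfi, hf⟩ := ih e₀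
    refine ⟨Function.update f (i + 1) e, Function.update_self _ _ _, fun n hn => ?_⟩
    rw [Function.update_of_ne (by omega)]
    rcases Nat.lt_succ_iff_lt_or_eq.1 hn with hn | rfl
    · rw [Function.update_of_ne (by omega)]
      exact hf n hn
    · rw [Function.update_self, hfi, he₀]

theorem exists_path_eq_above (w : B.PathSpace) {i : ℕ} (e : B.E i)
    (he : B.tgt e = B.tgt (w.1 i)) :
    ∃ z : B.PathSpace, z.1 i = e ∧ ∀ n, i < n → z.1 n = w.1 n := by
  classical
  obtain ⟨f, hfi, hf⟩ := B.exists_chain_to_edge e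
  let z : ∀ n, B.E n := fun n => if n ≤ i then f n else w.1 n
  refine ⟨⟨z, fun n => ?_⟩, by simp [z, hfi], fun n hn => by simp [z, hn.not_ge]⟩
  rcases lt_trichotomy n i with hn | rfl | hn
  · simp only [z, hn.le, Nat.succ_le_of_lt hn, if_true]
    exact hf n hn
  · simp only [z, le_rfl, if_true, Nat.not_succ_le_self, if_false, hfi, he]
    exact w.2 n
  · simp only [z, hn.not_ge, (Nat.lt_succ_of_lt hn).not_ge, if_false]
    exact w.2 n

theorem exists_pathLT_at_of_not_isMinEdge (w : B.PathSpace) {i : ℕ}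
    (h : ¬ B.IsMinEdge (w.1 i)) :
    ∃ z : B.PathSpace, B.elt (z.1 i) (w.1 i) ∧ ∀ n, i < n → z.1 n = w.1 n := by
  obtain ⟨e, he⟩ : ∃ e, B.elt e (w.1 i) := by simpa [IsMinEdge] using h
  obtain ⟨z, hzi, hz⟩ := B.exists_path_eq_above w e (B.elt_tgt _ _ _ he)
  exact ⟨z, hzi ▸ he, hz⟩

theorem not_isMaxPath_of_pathLT {x y : B.PathSpace} (h : B.pathLT x y) : ¬ B.IsMaxPath x := by
  obtain ⟨N, hN, -⟩ := h
  exact fun hx => hx N _ hN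

theorem pathLT_or_pathLT_of_ne {x y : B.PathSpace} (hne : x ≠ y) {M : ℕ}
    (hM : ∀ n, M < n → x.1 n = y.1 n) : B.pathLT x y ∨ B.pathLT y x := by
  classical
  obtain ⟨n₀, hn₀⟩ : ∃ n, x.1 n ≠ y.1 n := by
    by_contra! h
    exact hne (Subtype.ext (funext h))
  have hn₀M : n₀ ≤ M := by
    by_contra! h
    exact hn₀ (hM n₀ h)
  set N := Nat.findGreatest (fun n => x.1 n ≠ y.1 n) M
  have hN : x.1 N ≠ y.1 N := Nat.findGreatest_spec (P := fun n => x.1 n ≠ y.1 n) hn₀M hn₀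
  have hafter : ∀ n, N < n → x.1 n = y.1 n := fun n hn => by
    by_cases hnM : n ≤ M
    · by_contra h
      exact Nat.findGreatest_is_greatest hn hnM h
    · exact hM n (by omega)
  have htgt : B.tgt (x.1 N) = B.tgt (y.1 N) := by
    rw [x.2 N, y.2 N, hafter (N + 1) N.lt_succ_self]
  rcases B.elt_total N _ _ htgt hN with h | h
  · exact Or.inl ⟨N, h, hafter⟩
  · exact Or.inr ⟨N, h, fun n hn => (hafter n hn).symm⟩

theorem eq_of_pathLT_succ {w a b : B.PathSpace}
    (ha : B.pathLT w a) (ha' : ∀ z, B.pathLT w z → ¬ B.pathLT z a)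
    (hb : B.pathLT w b) (hb' : ∀ z, B.pathLT w z → ¬ B.pathLT z b) : a = b := by
  by_contra hne
  obtain ⟨Na, -, hNa⟩ := id ha
  obtain ⟨Nb, -, hNb⟩ := id hb
  have hcof : ∀ n, max Na Nb < n → a.1 n = b.1 n := fun n hn => by
    rw [← hNa n (by omega), ← hNb n (by omega)]
  rcases B.pathLT_or_pathLT_of_ne hne hcof with h | h
  · exact hb' a ha h
  · exact ha' b hb h

theorem iterZ_conj {C : BDiagram} (e : B.PathSpace ≃ C.PathSpace)
    {T : B.PathSpace ≃ B.PathSpace} {T' : C.PathSpace ≃ C.PathSpace}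
    (hconj : ∀ x, e (T x) = T' (e x)) (m : ℤ) (x : B.PathSpace) :
    e (B.iterZ T m x) = C.iterZ T' m (e x) := by
  have hT' : (T' : Equiv.Perm C.PathSpace) = e.permCongrHom T := Equiv.ext fun y => by
    rw [Equiv.permCongrHom_coe, Equiv.permCongr_apply, hconj, Equiv.apply_symm_apply]
  rw [iterZ, iterZ, hT', ← map_zpow, Equiv.permCongrHom_coe, Equiv.permCongr_apply,
    Equiv.symm_apply_apply]

variable {B} {T : B.PathSpace ≃ B.PathSpace} {x y : B.PathSpace}

theorem SameCoding.mono {k k' : ℕ} (h : B.SameCoding T k x y) (hk : k' ≤ k) :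
    B.SameCoding T k' x y :=
  fun m i hi => h m i (hi.trans_le hk)

theorem HasCut.mono {j j' : ℕ} (h : B.HasCut T j x y) (hj : j' ≤ j) : B.HasCut T j' x y := by
  obtain ⟨m, hx, hy⟩ := h
  exact ⟨m, fun i hi => hx i (hi.trans_le hj), fun i hi => hy i (hi.trans_le hj)⟩

theorem exists_depthPair_mem_Ico (hne : x ≠ y) {a b : ℕ} (ha : B.SameCoding T a x y)
    (hb : ¬ B.SameCoding T b x y) : ∃ k ∈ Finset.Ico a b, B.DepthPair T k x y := by
  have hab : a ≤ b := by
    by_contra! h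
    exact hb (ha.mono h.le)
  obtain ⟨k, hk, hsame, hnot⟩ :=
    Nat.exists_mem_Ico_and_not_succ (P := (B.SameCoding T · x y)) hab ha hb
  exact ⟨k, hk, hne, hsame, hnot⟩

variable (B)

theorem castE_apply_telE {a b : ℕ} (f : B.TelE a b) {i j : ℕ} (hi : i < b - a) (hj : j < b - a)
    (h : a + i = a + j) : B.castE h (f.1 ⟨i, hi⟩) = f.1 ⟨j, hj⟩ := by
  obtain rfl : i = j := by omega
  rfl

theorem castV_eq_iff {m n : ℕ} (h : m = n) (v : B.V m) (F : ∀ n, B.V n) :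
    B.castV h v = F n ↔ v = F m := by
  subst h
  rfl

variable {ns : ℕ → ℕ} (hmono : StrictMono ns) (h0 : ns 0 = 0)

local notation "𝕋" => B.Telescope ns hmono h0

noncomputable def teleInvEdge (y : (𝕋).PathSpace) (i : ℕ) : B.E i :=
  have := lt_apply_blockIndex_succ hmono i
  have := apply_blockIndex_le hmono h0 i
  B.castE (Nat.add_sub_cancel' (apply_blockIndex_le hmono h0 i))
    ((y.1 (blockIndex hmono i)).1 ⟨i - ns (blockIndex hmono i), by omega⟩)

theorem teleInvEdge_eq (y : (𝕋).PathSpace) {l i : ℕ} (h1 : ns l ≤ i) (h2 : i < ns (l + 1)) :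
    B.teleInvEdge hmono h0 y i =
      B.castE (Nat.add_sub_cancel' h1) ((y.1 l).1 ⟨i - ns l, by omega⟩) := by
  obtain rfl := blockIndex_eq hmono h0 h1 h2
  rfl

theorem teleInvEdge_add (y : (𝕋).PathSpace) {l j : ℕ} (hj : j < ns (l + 1) - ns l) :
    B.teleInvEdge hmono h0 y (ns l + j) = (y.1 l).1 ⟨j, hj⟩ := by
  rw [B.teleInvEdge_eq hmono h0 y (Nat.le_add_right _ _) (by omega)]
  exact B.castE_apply_telE _ _ _ _

theorem tgt_teleInvEdge (y : (𝕋).PathSpace) (i : ℕ) :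
    B.tgt (B.teleInvEdge hmono h0 y i) = B.src (B.teleInvEdge hmono h0 y (i + 1)) := by
  obtain ⟨l, j, hj, rfl⟩ := exists_block_add hmono h0 i
  rw [B.teleInvEdge_add hmono h0 y hj]
  by_cases hlast : j + 1 < ns (l + 1) - ns l
  · exact ((y.1 l).2 j hlast).trans (congrArg B.src (B.teleInvEdge_add hmono h0 y hlast).symm)
  · -- the last edge of block `l` is followed by the first edge of block `l + 1`
    obtain rfl : j = ns (l + 1) - ns l - 1 := by omega
    have hnext := B.teleInvEdge_add hmono h0 y (l := l + 1) (j := 0)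
      (by have := hmono (Nat.lt_add_one (l + 1)); omega)
    exact (B.castV_eq_iff _ _ fun n => B.src (B.teleInvEdge hmono h0 y n)).1
      ((y.2 l).trans (congrArg B.src hnext.symm))

noncomputable def teleEquiv : B.PathSpace ≃ (𝕋).PathSpace where
  toFun := B.teleMap ns hmono h0
  invFun y := ⟨B.teleInvEdge hmono h0 y, B.tgt_teleInvEdge hmono h0 y⟩
  left_inv x := Subtype.ext <| funext fun i => by
    obtain ⟨l, j, hj, rfl⟩ := exists_block_add hmono h0 i
    exact B.teleInvEdge_add hmono h0 _ hj
  right_inv y := Subtype.ext <| funext fun l => Subtype.ext <| funext fun j =>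
    B.teleInvEdge_add hmono h0 y j.2

theorem teleEquiv_edge_eq_iff (x y : B.PathSpace) (l : ℕ) :
    (B.teleEquiv hmono h0 x).1 l = (B.teleEquiv hmono h0 y).1 l ↔
      ∀ j < ns (l + 1) - ns l, x.1 (ns l + j) = y.1 (ns l + j) := by
  refine ⟨fun h j hj => congrFun (congrArg Subtype.val h) ⟨j, hj⟩, fun h => ?_⟩
  exact Subtype.ext <| funext fun j => h j j.2

theorem pathLT_teleEquiv_iff (x y : B.PathSpace) :
    (𝕋).pathLT (B.teleEquiv hmono h0 x) (B.teleEquiv hmono h0 y) ↔ B.pathLT x y := by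
  constructor
  · rintro ⟨L, ⟨N, hN, hlt, hblock⟩, habove⟩
    refine ⟨ns L + N, hlt, fun n hn => ?_⟩
    obtain ⟨l, j, hj, rfl⟩ := exists_block_add hmono h0 n
    rcases lt_trichotomy l L with hl | rfl | hl
    · have := hmono.monotone (by omega : l + 1 ≤ L)
      omega
    · exact hblock j hj (by omega)
    · exact (B.teleEquiv_edge_eq_iff hmono h0 x y l).1 (habove l hl) j hj
  · rintro ⟨n, hlt, habove⟩
    obtain ⟨L, N, hN, rfl⟩ := exists_block_add hmono h0 n
    refine ⟨L, ⟨N, hN, hlt, fun j _ hj => habove (ns L + j) (by omega)⟩, fun l hl => ?_⟩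
    have := hmono.monotone (by omega : L + 1 ≤ l)
    exact (B.teleEquiv_edge_eq_iff hmono h0 x y l).2 fun j _ => habove _ (by omega)

theorem isMaxPath_teleEquiv {x : B.PathSpace} (hx : B.IsMaxPath x) :
    (𝕋).IsMaxPath (B.teleEquiv hmono h0 x) := by
  rintro l g ⟨N, hN, hlt, -⟩
  exact hx _ _ hlt

theorem isMinEdge_of_isMinEdge_teleEquiv {x : B.PathSpace} {l : ℕ}
    (hx : (𝕋).IsMinEdge ((B.teleEquiv hmono h0 x).1 l)) {j : ℕ} (hj : j < ns (l + 1) - ns l) :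
    B.IsMinEdge (x.1 (ns l + j)) := by
  by_contra hnot
  obtain ⟨z, hlt, habove⟩ := B.exists_pathLT_at_of_not_isMinEdge x hnot
  exact hx ((B.teleEquiv hmono h0 z).1 l)
    ⟨j, hj, hlt, fun i _ hi => habove (ns l + i) (by omega)⟩

theorem isMinPath_teleEquiv_symm {u : (𝕋).PathSpace} (hu : (𝕋).IsMinPath u) :
    B.IsMinPath ((B.teleEquiv hmono h0).symm u) := by
  intro n
  obtain ⟨l, j, hj, rfl⟩ := exists_block_add hmono h0 n
  rw [← (B.teleEquiv hmono h0).apply_symm_apply u] at hu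
  exact B.isMinEdge_of_isMinEdge_teleEquiv hmono h0 (hu l) hj

theorem teleEquiv_vershik (hproper : B.ProperlyOrdered) {T : B.PathSpace ≃ B.PathSpace}
    (hT : B.IsVershik T) {T' : (𝕋).PathSpace ≃ (𝕋).PathSpace} (hT' : (𝕋).IsVershik T')
    (x : B.PathSpace) : B.teleEquiv hmono h0 (T x) = T' (B.teleEquiv hmono h0 x) := by
  set e := B.teleEquiv hmono h0
  by_cases hmax : B.IsMaxPath x
  · apply e.symm.injective
    rw [e.symm_apply_apply]
    exact hproper.1.unique (hT.2 x hmax)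
      (B.isMinPath_teleEquiv_symm hmono h0 (hT'.2 _ (B.isMaxPath_teleEquiv hmono h0 hmax)))
  · obtain ⟨hlt, hsucc⟩ := hT.1 x hmax
    have hlt_tele := (B.pathLT_teleEquiv_iff hmono h0 x (T x)).2 hlt
    obtain ⟨hlt', hsucc'⟩ := hT'.1 (e x) ((𝕋).not_isMaxPath_of_pathLT hlt_tele)
    refine (𝕋).eq_of_pathLT_succ hlt_tele (fun z h1 h2 => ?_) hlt' hsucc'
    rw [← e.apply_symm_apply z, pathLT_teleEquiv_iff] at h1 h2
    exact hsucc _ h1 h2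

variable {B hmono h0} {T : B.PathSpace ≃ B.PathSpace}
  {T' : (B.Telescope ns hmono h0).PathSpace ≃ (B.Telescope ns hmono h0).PathSpace}

theorem sameCoding_teleEquiv_iff
    (hconj : ∀ x, B.teleEquiv hmono h0 (T x) = T' (B.teleEquiv hmono h0 x)) (k : ℕ)
    (x y : B.PathSpace) :
    (𝕋).SameCoding T' k (B.teleEquiv hmono h0 x) (B.teleEquiv hmono h0 y) ↔
      B.SameCoding T (ns k) x y := by
  simp only [SameCoding, ← B.iterZ_conj _ hconj, teleEquiv_edge_eq_iff]
  exact forall_congr' fun m =>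
    forall_block_iff (Q := fun n => (B.iterZ T m x).1 n = (B.iterZ T m y).1 n) hmono h0 k

theorem hasCut_teleEquiv_symm
    (hconj : ∀ x, B.teleEquiv hmono h0 (T x) = T' (B.teleEquiv hmono h0 x)) {j : ℕ}
    {u v : (𝕋).PathSpace} (h : (𝕋).HasCut T' j u v) :
    B.HasCut T (ns j) ((B.teleEquiv hmono h0).symm u) ((B.teleEquiv hmono h0).symm v) := by
  obtain ⟨m, hu, hv⟩ := h
  have hmin : ∀ w, (∀ l < j, (𝕋).IsMinEdge (((𝕋).iterZ T' m w).1 l)) →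
      ∀ n < ns j, B.IsMinEdge ((B.iterZ T m ((B.teleEquiv hmono h0).symm w)).1 n) := by
    intro w hw
    rw [← (B.teleEquiv hmono h0).apply_symm_apply w, ← B.iterZ_conj _ hconj] at hw
    exact (forall_block_iff hmono h0 j).1 fun l hl i hi =>
      B.isMinEdge_of_isMinEdge_teleEquiv hmono h0 (hw l hl) hi
  exact ⟨m, hmin u hu, hmin v hv⟩

theorem exists_depthPair_teleEquiv_symm
    (hconj : ∀ x, B.teleEquiv hmono h0 (T x) = T' (B.teleEquiv hmono h0 x)) {k : ℕ}
    {u v : (𝕋).PathSpace} (h : (𝕋).DepthPair T' k u v) :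
    ∃ n ∈ Finset.Ico (ns k) (ns (k + 1)),
      B.DepthPair T n ((B.teleEquiv hmono h0).symm u) ((B.teleEquiv hmono h0).symm v) := by
  obtain ⟨hne, hsame, hnot⟩ := h
  rw [← (B.teleEquiv hmono h0).apply_symm_apply u, ← (B.teleEquiv hmono h0).apply_symm_apply v,
    sameCoding_teleEquiv_iff hconj] at hsame hnot
  exact exists_depthPair_mem_Ico ((B.teleEquiv hmono h0).symm.injective.ne hne) hsame hnot

end BDiagram

theorem weaklyWellTimed_lifts_general
    (B : BDiagram) (T : B.PathSpace ≃ B.PathSpace)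
    (hproper : B.ProperlyOrdered) (hT : B.IsVershik T)
    (ns : ℕ → ℕ) (hmono : StrictMono ns) (h0 : ns 0 = 0)
    (T' : (B.Telescope ns hmono h0).PathSpace ≃ (B.Telescope ns hmono h0).PathSpace)
    (hT' : (B.Telescope ns hmono h0).IsVershik T')
    (hww : (B.Telescope ns hmono h0).WeaklyWellTimed T') :
    B.WeaklyWellTimed T := by
  have hconj := B.teleEquiv_vershik hmono h0 hproper hT hT'
  intro K
  obtain ⟨k, hKk, hk, hcuts⟩ := hww K
  have hpairs : ∀ j, ∃ n ∈ Finset.Ico (ns k) (ns (k + 1)),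
      ∃ x y, B.DepthPair T n x y ∧ B.HasCut T j x y := fun j => by
    obtain ⟨u, v, huv, hcut⟩ := hcuts (k + 1 + j) (by omega)
    obtain ⟨n, hn, hdepth⟩ := BDiagram.exists_depthPair_teleEquiv_symm hconj huv
    refine ⟨n, hn, _, _, hdepth, (BDiagram.hasCut_teleEquiv_symm hconj hcut).mono ?_⟩
    have : k + 1 + j ≤ ns (k + 1 + j) := hmono.le_apply
    omega
  obtain ⟨n, hn, hall⟩ := Finset.exists_mem_forall_of_antitone _
    (fun n j j' hjj' ⟨x, y, hxy, hcut⟩ => ⟨x, y, hxy, hcut.mono hjj'⟩) hpairs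
  have : k ≤ ns k := hmono.le_apply
  rw [Finset.mem_Ico] at hn
  exact ⟨n, by omega, by omega, fun j _ => hall j⟩

/-- If some telescoping of a simple, properly ordered
Bratteli–Vershik system is weakly well timed, then so is the system itself. -/
theorem weaklyWellTimed_lifts
    (B : BDiagram) (T : B.PathSpace ≃ B.PathSpace)
    (hproper : B.ProperlyOrdered) (hsimple : B.Simple) (hT : B.IsVershik T)
    (ns : ℕ → ℕ) (hmono : StrictMono ns) (h0 : ns 0 = 0)
    (T' : (B.Telescope ns hmono h0).PathSpace ≃ (B.Telescope ns hmono h0).PathSpace)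
    (hT' : (B.Telescope ns hmono h0).IsVershik T')
    (hww : (B.Telescope ns hmono h0).WeaklyWellTimed T') :
    B.WeaklyWellTimed T :=
  weaklyWellTimed_lifts_general B T hproper hT ns hmono h0 T' hT' hww
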